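/- Let T be a Boolean function over disjoint finite variable sets X and Y, and suppose every variable in a subset D ⊆ Y is defined by X with respect to T. Then the value of the 2AMC sum is unchanged when D is moved to the outer aggregation, provided the transform t : S_I → S_O is a multiplicative monoid homomorphism on the relevant values: ⊕ᴼ_{x ∈ int(X)} t(⊕ᴵ_{y ∈ mod(T|ₓ)} ∏ᴵ_{l∈y} α(l)) = ⊕ᴼ_{(x,d) ∈ int(X∪D)} (∏ᴼ_{l∈d} t(α(l))) ⊗ᴼ t(⊕ᴵ_{y ∈ mod(T|_{x∪d})} ∏ᴵ_{l∈y} α(l)), where in the single-defined-variable case D = {a}, for each x the defined value a|ₓ is the unique literal of a consistent with T and x, and t(e⊕ᴵ) = e⊕ᴼ. -/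
import Mathlib


open Finset

/-- Moving a defined inner variable to the outer aggregation of a 2AMC sum.
`T` is a (Bool-valued) theory over disjoint variable sets `X` (outer) and `Y`
(inner), `a ∈ Y` is defined by `X`: in every model extending an assignment `x`
to `X`, `a` takes the value `d x`. The transform `t` sends `0` to `0` and is a
multiplicative monoid homomorphism on the relevant (observable) values. Then the
2AMC sum is unchanged when `a` is moved to the outer aggregation. -/
theorem stmt14 {X Y : Type*} [Fintype X] [DecidableEq X] [Fintype Y] [DecidableEq Y]
    {S_I S_O : Type*} [CommSemiring S_I] [CommSemiring S_O]
    (T : (X → Bool) → (Y → Bool) → Bool) (a : Y) (α : Y → Bool → S_I)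
    (t : S_I → S_O) (d : (X → Bool) → Bool)
    (hdef : ∀ (x : X → Bool) (y : Y → Bool), T x y = true → y a = d x)
    (ht0 : t 0 = 0)
    (hhom : ∀ (x : X → Bool) (b : Bool),
      t (α a b *
          ∑ y ∈ univ.filter (fun y : Y → Bool => T x y = true ∧ y a = b),
            ∏ v ∈ univ.erase a, α v (y v))
        = t (α a b) *
          t (∑ y ∈ univ.filter (fun y : Y → Bool => T x y = true ∧ y a = b),
              ∏ v ∈ univ.erase a, α v (y v))) :
    ∑ x : X → Bool,
        t (∑ y ∈ univ.filter (fun y : Y → Bool => T x y = true), ∏ v : Y, α v (y v))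
      = ∑ x : X → Bool, ∑ b : Bool,
          t (α a b) *
            t (∑ y ∈ univ.filter (fun y : Y → Bool => T x y = true ∧ y a = b),
                ∏ v ∈ univ.erase a, α v (y v)) := by
  refine Finset.sum_congr rfl fun x _ => ?_
  have hfilter : (univ.filter (fun y : Y → Bool => T x y = true))
      = univ.filter (fun y : Y → Bool => T x y = true ∧ y a = d x) := by
    ext y
    simp only [Finset.mem_filter, Finset.mem_univ, true_and]
    exact ⟨fun h => ⟨h, hdef x y h⟩, fun h => h.1⟩
  have hempty : (univ.filter (fun y : Y → Bool => T x y = true ∧ y a = !(d x)))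
      = (∅ : Finset (Y → Bool)) := by
    ext y
    simp only [Finset.mem_filter, Finset.mem_univ, true_and, Finset.notMem_empty,
      iff_false]
    rintro ⟨h1, h2⟩
    rw [hdef x y h1] at h2
    exact absurd h2 (by cases d x <;> simp)
  have hprod : ∀ y : Y → Bool, (∏ v : Y, α v (y v))
      = α a (y a) * ∏ v ∈ univ.erase a, α v (y v) := by
    intro y
    rw [← Finset.mul_prod_erase univ (fun v => α v (y v)) (Finset.mem_univ a)]
  have key : (∑ y ∈ univ.filter (fun y : Y → Bool => T x y = true), ∏ v : Y, α v (y v))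
      = α a (d x) * ∑ y ∈ univ.filter (fun y : Y → Bool => T x y = true ∧ y a = d x),
          ∏ v ∈ univ.erase a, α v (y v) := by
    rw [hfilter, Finset.mul_sum]
    refine Finset.sum_congr rfl fun y hy => ?_
    simp only [Finset.mem_filter] at hy
    rw [hprod y, hy.2.2]
  rw [key, hhom x (d x)]
  have : ∀ b : Bool, b ≠ d x →
      t (α a b) * t (∑ y ∈ univ.filter (fun y : Y → Bool => T x y = true ∧ y a = b),
          ∏ v ∈ univ.erase a, α v (y v)) = 0 := by
    intro b hb
    have hb' : b = !(d x) := by cases b <;> cases hdx : d x <;> simp_all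
    rw [hb', hempty]
    simp [ht0]
  rw [Fintype.sum_eq_single (d x) this]
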